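/- For every real ε with 0 ≤ ε < 1/10 there exists a positive real constant c such that for every k ∈ ℕ, the iterated point–line construction satisfies δ_k ≥ c · n_k^{ε}. -/

import Mathlib

noncomputable section

/-- Points of the real plane. -/
abbrev Pt := ℝ × ℝ

/-- Lines are affine subspaces of the plane (we restrict to 1-dimensional ones via `IsLine`). -/
abbrev Ln := AffineSubspace ℝ Pt

/-- A line is a 1-dimensional affine subspace of `ℝ²`. -/
def IsLine (l : Ln) : Prop := Module.finrank ℝ l.direction = 1

/-- The line through two (distinct) points. -/
def lineThrough (p q : Pt) : Ln := affineSpan ℝ {p, q}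

/-- The iterated point–line construction: `P 1` is a set of four points in general position,
`L 1` is the set of lines through pairs of them; `P (k+1)` adds all intersection points of
pairs of distinct lines of `L k`, and `L (k+1)` adds all lines through pairs of distinct
points of `P (k+1)`.  No two distinct lines of any `L k` are parallel. -/
structure IterConfig where
  P : ℕ → Set Pt
  L : ℕ → Set Ln
  card_P1 : (P 1).ncard = 4
  genPos : ∀ p ∈ P 1, ∀ q ∈ P 1, ∀ r ∈ P 1,
    p ≠ q → p ≠ r → q ≠ r → ¬ Collinear ℝ ({p, q, r} : Set Pt)
  L1_def : L 1 = {l | ∃ p ∈ P 1, ∃ q ∈ P 1, p ≠ q ∧ l = lineThrough p q}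
  P_succ : ∀ k, 1 ≤ k →
    P (k + 1) = P k ∪ {x | ∃ l ∈ L k, ∃ l' ∈ L k, l ≠ l' ∧ x ∈ l ∧ x ∈ l'}
  L_succ : ∀ k, 1 ≤ k →
    L (k + 1) = L k ∪ {l | ∃ p ∈ P (k + 1), ∃ q ∈ P (k + 1), p ≠ q ∧ l = lineThrough p q}
  noParallel : ∀ k, 1 ≤ k → ∀ l ∈ L k, ∀ l' ∈ L k, l ≠ l' →
    AffineSubspace.direction l ≠ AffineSubspace.direction l'

/-- `n k`, the number of points at the beginning of stage `k`. -/
def nPts (C : IterConfig) (k : ℕ) : ℕ := (C.P k).ncard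

/-- `m k`, the number of lines at the beginning of stage `k`. -/
def nLns (C : IterConfig) (k : ℕ) : ℕ := (C.L k).ncard

/-- `d k p`, the degree of a point: the number of lines of `L k` incident to `p`. -/
def ptDeg (C : IterConfig) (k : ℕ) (p : Pt) : ℕ := {l | l ∈ C.L k ∧ p ∈ l}.ncard

/-- `δ k`, the minimum degree of a point of `P k`. -/
def minDeg (C : IterConfig) (k : ℕ) : ℕ := sInf {d | ∃ p ∈ C.P k, d = ptDeg C k p}

/-!
Fix `k ≥ 1` and `p ∈ P (k + 1)` of degree `d`. The `d` lines of `L (k + 1)` through `p` cover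
`P k`, so one of them, `l₀`, carries a set `S` of `h` points of `P k \ {p}` with `n_k ≤ d h + 1`.
Two points `q, q'` of `P 1` off `l₀` (general position) project `S` into two fans of at least
`h - 1` lines of `L k` each, none through both `q` and `q'`. As no two lines are parallel, the
fans cross in a grid of at least `(h - 1)²` points of `P (k + 1)`, while any line meets the grid
in at most `h` points (each grid point is determined by its line to `q` and by its line to `q'`).
Covering the grid by the lines through `p` gives `(h - 1)² ≤ d h + 1`, hence `h ≤ d + 2` and
`n_k ≤ (d + 1)²`. With `n_{k+1} ≤ n_k + m_k² ≤ 2 n_k⁴` this yields `n_{k+1} ≤ (4 δ_{k+1})⁸`,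
i.e. `δ ≥ n^{1/8} / 4`.
-/

open Set AffineSubspace

lemma Set.ncard_le_ncard_mul_of_subset_biUnion {ι α : Type*} {I : Set ι} (hI : I.Finite)
    {s : ι → Set α} {t : Set α} (ht : t ⊆ ⋃ i ∈ I, s i) {m : ℕ}
    (hm : ∀ i ∈ I, (t ∩ s i).ncard ≤ m) : t.ncard ≤ I.ncard * m := by
  have hcover : t = ⋃ i ∈ hI.toFinset, t ∩ s i := by
    simp only [Finite.mem_toFinset, ← inter_iUnion₂]
    exact (inter_eq_left.mpr ht).symm
  calc t.ncard = (⋃ i ∈ hI.toFinset, t ∩ s i).ncard := congrArg ncard hcover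
    _ ≤ ∑ i ∈ hI.toFinset, (t ∩ s i).ncard := Finset.set_ncard_biUnion_le _ _
    _ ≤ hI.toFinset.card • m := Finset.sum_le_card_nsmul _ _ _ (by simpa using hm)
    _ = I.ncard * m := by rw [smul_eq_mul, ncard_eq_toFinset_card I hI]

lemma mem_lineThrough_left (p q : Pt) : p ∈ lineThrough p q :=
  left_mem_affineSpan_pair ℝ p q

lemma mem_lineThrough_right (p q : Pt) : q ∈ lineThrough p q :=
  right_mem_affineSpan_pair ℝ p q

lemma lineThrough_comm (p q : Pt) : lineThrough p q = lineThrough q p := by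
  rw [lineThrough, lineThrough, pair_comm]

lemma isLine_lineThrough {p q : Pt} (h : p ≠ q) : IsLine (lineThrough p q) := by
  rw [IsLine, lineThrough, direction_affineSpan, vectorSpan_pair]
  exact finrank_span_singleton (vsub_ne_zero.mpr h)

lemma eq_lineThrough_of_mem {l : Ln} (hl : IsLine l) {p q : Pt} (hp : p ∈ l) (hq : q ∈ l)
    (hpq : p ≠ q) : l = lineThrough p q := by
  have hle : lineThrough p q ≤ l := by
    rw [lineThrough, affineSpan_le]
    rintro x (rfl | rfl) <;> assumption
  have hdir : (lineThrough p q).direction = l.direction :=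
    Submodule.eq_of_le_of_finrank_eq (direction_le hle)
      (by rw [(isLine_lineThrough hpq : _ = 1), hl])
  exact (ext_of_direction_eq hdir ⟨p, mem_lineThrough_left p q, hp⟩).symm

lemma subsingleton_inter_of_ne {l l' : Ln} (hl : IsLine l) (hl' : IsLine l') (hne : l ≠ l') :
    ((l : Set Pt) ∩ l').Subsingleton := by
  rintro x ⟨hxl, hxl'⟩ y ⟨hyl, hyl'⟩
  by_contra hxy
  exact hne ((eq_lineThrough_of_mem hl hxl hyl hxy).trans
    (eq_lineThrough_of_mem hl' hxl' hyl' hxy).symm)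

lemma IsLine.nonempty {l : Ln} (hl : IsLine l) : (l : Set Pt).Nonempty := by
  rw [nonempty_iff_ne_bot]
  rintro rfl
  rw [IsLine, direction_bot, finrank_bot] at hl
  exact zero_ne_one hl

lemma inter_nonempty_of_direction_ne {l l' : Ln} (hl : IsLine l) (hl' : IsLine l')
    (hd : l.direction ≠ l'.direction) : ((l : Set Pt) ∩ l').Nonempty := by
  refine inter_nonempty_of_nonempty_of_sup_direction_eq_top hl.nonempty hl'.nonempty ?_
  have hsup : Module.finrank ℝ ↥(l.direction ⊔ l'.direction) ≤ 2 :=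
    (Submodule.finrank_le _).trans (by simp)
  apply Submodule.eq_top_of_finrank_eq
  by_contra hne
  have hle : Module.finrank ℝ ↥(l.direction ⊔ l'.direction) ≤ 1 := by
    simp only [Module.finrank_prod, Module.finrank_self] at hne; omega
  exact hd ((Submodule.eq_of_le_of_finrank_le le_sup_left (hle.trans hl.ge)).trans
    (Submodule.eq_of_le_of_finrank_le le_sup_right (hle.trans hl'.ge)).symm)

lemma collinear_of_subset {l : Ln} (hl : IsLine l) {s : Set Pt} (hs : s ⊆ l) :
    Collinear ℝ s := by
  have hspan : vectorSpan ℝ s ≤ l.direction := by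
    rw [← direction_affineSpan]; exact direction_le (affineSpan_le.mpr hs)
  exact (Submodule.rank_mono hspan).trans (Module.rank_eq_one_iff_finrank_eq_one.mpr hl).le

/-- Points of `Y` on a line `l` outside the pencil `A` through `q` have pairwise distinct joins
with `q`. -/
lemma ncard_inter_le_of_lineThrough_mem {q : Pt} {A : Set Ln} (hA : A.Finite) {Y : Set Pt}
    (hY : ∀ y ∈ Y, y ≠ q ∧ lineThrough q y ∈ A) {l : Ln} (hl : IsLine l) (hlA : l ∉ A) :
    (Y ∩ l).ncard ≤ A.ncard := by
  refine ncard_le_ncard_of_injOn (lineThrough q) (fun y hy => (hY y hy.1).2) ?_ hA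
  rintro y ⟨hyY, hyl⟩ y' ⟨_, hy'l⟩ hyy'
  by_contra hne
  have hq : lineThrough q y = lineThrough y y' :=
    eq_lineThrough_of_mem (isLine_lineThrough (hY y hyY).1.symm) (mem_lineThrough_right q y)
      (hyy' ▸ mem_lineThrough_right q y') hne
  exact hlA (eq_lineThrough_of_mem hl hyl hy'l hne ▸ hq ▸ (hY y hyY).2)

def grid (A B : Set Ln) : Set Pt := (⋃ a ∈ A, (a : Set Pt)) ∩ ⋃ b ∈ B, (b : Set Pt)

lemma mem_grid {A B : Set Ln} {x : Pt} : x ∈ grid A B ↔ (∃ a ∈ A, x ∈ a) ∧ ∃ b ∈ B, x ∈ b := by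
  simp [grid]

lemma grid_comm (A B : Set Ln) : grid A B = grid B A := inter_comm _ _

section Grid

variable {q q' : Pt} {A B : Set Ln}

lemma lineThrough_mem_of_mem_grid (hA : ∀ a ∈ A, IsLine a ∧ q ∈ a ∧ q' ∉ a)
    (hB : ∀ b ∈ B, IsLine b ∧ q' ∈ b ∧ q ∉ b) {x : Pt} (hx : x ∈ grid A B) :
    x ≠ q ∧ lineThrough q x ∈ A := by
  obtain ⟨⟨a, ha, hxa⟩, b, hb, hxb⟩ := mem_grid.mp hx
  have hxq : x ≠ q := fun h => (hB b hb).2.2 (h ▸ hxb)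
  exact ⟨hxq, eq_lineThrough_of_mem (hA a ha).1 (hA a ha).2.1 hxa hxq.symm ▸ ha⟩

lemma ncard_mul_ncard_le_ncard_grid (hA : ∀ a ∈ A, IsLine a ∧ q ∈ a ∧ q' ∉ a)
    (hB : ∀ b ∈ B, IsLine b ∧ q' ∈ b ∧ q ∉ b)
    (hmeet : ∀ a ∈ A, ∀ b ∈ B, ((a : Set Pt) ∩ b).Nonempty)
    (hfin : (grid A B).Finite) : A.ncard * B.ncard ≤ (grid A B).ncard := by
  have hsub : A ×ˢ B ⊆ (fun x => (lineThrough q x, lineThrough q' x)) '' grid A B := by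
    rintro ⟨a, b⟩ ⟨ha, hb⟩
    obtain ⟨x, hxa, hxb⟩ := hmeet a ha b hb
    have hxq : x ≠ q := fun h => (hB b hb).2.2 (h ▸ hxb)
    have hxq' : x ≠ q' := fun h => (hA a ha).2.2 (h ▸ hxa)
    refine ⟨x, mem_grid.mpr ⟨⟨a, ha, hxa⟩, b, hb, hxb⟩, ?_⟩
    show (lineThrough q x, lineThrough q' x) = (a, b)
    rw [← eq_lineThrough_of_mem (hA a ha).1 (hA a ha).2.1 hxa hxq.symm,
      ← eq_lineThrough_of_mem (hB b hb).1 (hB b hb).2.1 hxb hxq'.symm]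
  rw [← ncard_prod]
  exact (ncard_le_ncard hsub (hfin.image _)).trans (ncard_image_le hfin)

lemma ncard_grid_inter_le (hA : ∀ a ∈ A, IsLine a ∧ q ∈ a ∧ q' ∉ a)
    (hB : ∀ b ∈ B, IsLine b ∧ q' ∈ b ∧ q ∉ b) (hAf : A.Finite) (hBf : B.Finite) {l : Ln}
    (hl : IsLine l) :
    (grid A B ∩ l).ncard ≤ max A.ncard B.ncard := by
  by_cases hlA : l ∈ A
  · have hlB : l ∉ B := fun hlB => (hA l hlA).2.2 (hB l hlB).2.1
    rw [grid_comm]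
    exact (ncard_inter_le_of_lineThrough_mem hBf
      (fun y hy => lineThrough_mem_of_mem_grid hB hA hy) hl hlB).trans (le_max_right _ _)
  · exact (ncard_inter_le_of_lineThrough_mem hAf
      (fun y hy => lineThrough_mem_of_mem_grid hA hB hy) hl hlA).trans (le_max_left _ _)

end Grid

def crossings (L : Set Ln) : Set Pt := ⋃ ll ∈ L.offDiag, (ll.1 : Set Pt) ∩ ll.2

section Crossings

variable {L : Set Ln}

lemma subsingleton_inter_of_mem_offDiag (hlines : ∀ l ∈ L, IsLine l) {ll : Ln × Ln}
    (hll : ll ∈ L.offDiag) : ((ll.1 : Set Pt) ∩ ll.2).Subsingleton :=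
  subsingleton_inter_of_ne (hlines _ hll.1) (hlines _ hll.2.1) hll.2.2

lemma crossings_finite (hL : L.Finite) (hlines : ∀ l ∈ L, IsLine l) : (crossings L).Finite :=
  hL.offDiag.biUnion fun _ hll => (subsingleton_inter_of_mem_offDiag hlines hll).finite

lemma ncard_crossings_le (hL : L.Finite) (hlines : ∀ l ∈ L, IsLine l) :
    (crossings L).ncard ≤ L.ncard ^ 2 := by
  have hle_one : ∀ ll ∈ L.offDiag, (crossings L ∩ ((ll.1 : Set Pt) ∩ ll.2)).ncard ≤ 1 := by
    intro ll hll
    have hsub : (crossings L ∩ ((ll.1 : Set Pt) ∩ ll.2)).Subsingleton :=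
      (subsingleton_inter_of_mem_offDiag hlines hll).anti inter_subset_right
    exact (ncard_le_one hsub.finite).mpr hsub
  calc (crossings L).ncard ≤ L.offDiag.ncard * 1 :=
        ncard_le_ncard_mul_of_subset_biUnion hL.offDiag subset_rfl hle_one
    _ ≤ (L ×ˢ L).ncard := by rw [mul_one]; exact ncard_le_ncard (offDiag_subset_prod L) (hL.prod hL)
    _ = L.ncard ^ 2 := by rw [ncard_prod, sq]

end Crossings

def fan (q : Pt) (S : Set Pt) (q' : Pt) : Set Ln := lineThrough q '' S \ {lineThrough q q'}

section Fan

variable {q q' : Pt} {S : Set Pt} {l : Ln}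

lemma ncard_fan_le (hS : S.Finite) : (fan q S q').ncard ≤ S.ncard :=
  (ncard_sdiff_singleton_le _ _).trans (ncard_image_le hS)

lemma le_ncard_fan_add_one (hS : S.Finite) (hl : IsLine l) (hSl : S ⊆ l) (hq : q ∉ l) :
    S.ncard ≤ (fan q S q').ncard + 1 := by
  have himage : ∀ a ∈ lineThrough q '' S, q ∈ a := by
    rintro _ ⟨z, -, rfl⟩; exact mem_lineThrough_left q z
  have hS_le : S.ncard ≤ (lineThrough q '' S).ncard := by
    have := ncard_inter_le_of_lineThrough_mem (hS.image _)
      (fun y hy => ⟨fun h : y = q => hq (h ▸ hSl hy), mem_image_of_mem _ hy⟩) hl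
      (fun hlA => hq (himage l hlA))
    rwa [inter_eq_left.mpr hSl] at this
  have hdiff := ncard_le_ncard_sdiff_add_ncard (lineThrough q '' S) {lineThrough q q'}
  rw [ncard_singleton] at hdiff
  exact hS_le.trans hdiff

lemma isLine_and_mem_fan (hSl : S ⊆ l) (hq : q ∉ l) (hqq' : q ≠ q') :
    ∀ a ∈ fan q S q', IsLine a ∧ q ∈ a ∧ q' ∉ a := by
  rintro _ ⟨⟨z, hz, rfl⟩, hne⟩
  have hqz : q ≠ z := fun h => hq (h ▸ hSl hz)
  refine ⟨isLine_lineThrough hqz, mem_lineThrough_left q z, fun hq' => hne ?_⟩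
  exact eq_lineThrough_of_mem (isLine_lineThrough hqz) (mem_lineThrough_left q z) hq' hqq'

end Fan

lemma mul_add_one_le_sq_of_sub_one_sq_le {D h : ℕ} (H : (h - 1) ^ 2 ≤ D * h + 1) :
    D * h + 1 ≤ (D + 1) ^ 2 := by
  rcases h with _ | h
  · nlinarith
  · rw [Nat.add_sub_cancel] at H
    nlinarith

lemma rpow_le_of_le_pow {N x ε : ℝ} {n : ℕ} (hn : n ≠ 0) (hN : 1 ≤ N) (hx : 0 ≤ x)
    (hNx : N ≤ x ^ n) (hε : ε ≤ (n : ℝ)⁻¹) : N ^ ε ≤ x :=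
  calc N ^ ε ≤ N ^ (n⁻¹ : ℝ) := Real.rpow_le_rpow_of_exponent_le hN hε
    _ ≤ (x ^ n) ^ (n⁻¹ : ℝ) := Real.rpow_le_rpow (by linarith) hNx (by positivity)
    _ = x := Real.pow_rpow_inv_natCast hx hn

namespace IterConfig

variable (C : IterConfig) {k : ℕ}

lemma P_subset_succ (hk : 1 ≤ k) : C.P k ⊆ C.P (k + 1) := by
  rw [C.P_succ k hk]; exact subset_union_left

lemma P_one_subset (hk : 1 ≤ k) : C.P 1 ⊆ C.P k := by
  induction k, hk using Nat.le_induction with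
  | base => exact subset_rfl
  | succ k hk ih => exact ih.trans (C.P_subset_succ hk)

lemma exists_eq_lineThrough (hk : 1 ≤ k) {l : Ln} (hl : l ∈ C.L k) :
    ∃ a ∈ C.P k, ∃ b ∈ C.P k, a ≠ b ∧ l = lineThrough a b := by
  induction k, hk using Nat.le_induction generalizing l with
  | base => rwa [C.L1_def] at hl
  | succ k hk ih =>
    rw [C.L_succ k hk] at hl
    rcases hl with hl | hl
    · obtain ⟨a, ha, b, hb, hab, rfl⟩ := ih hl
      exact ⟨a, C.P_subset_succ hk ha, b, C.P_subset_succ hk hb, hab, rfl⟩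
    · exact hl

lemma isLine_of_mem (hk : 1 ≤ k) {l : Ln} (hl : l ∈ C.L k) : IsLine l := by
  obtain ⟨a, _, b, _, hab, rfl⟩ := C.exists_eq_lineThrough hk hl
  exact isLine_lineThrough hab

lemma lineThrough_mem (hk : 2 ≤ k) {p q : Pt} (hp : p ∈ C.P k) (hq : q ∈ C.P k)
    (hpq : p ≠ q) : lineThrough p q ∈ C.L k := by
  obtain ⟨j, rfl⟩ : ∃ j, k = j + 1 := ⟨k - 1, by omega⟩
  rw [C.L_succ j (by omega)]
  exact Or.inr ⟨p, hp, q, hq, hpq, rfl⟩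

lemma lineThrough_mem_of_mem_P_one (hk : 1 ≤ k) {p q : Pt} (hp : p ∈ C.P k)
    (hq : q ∈ C.P 1) (hpq : p ≠ q) : lineThrough p q ∈ C.L k := by
  rcases hk.eq_or_lt with rfl | hk
  · rw [C.L1_def]; exact ⟨p, hp, q, hq, hpq, rfl⟩
  · exact C.lineThrough_mem hk hp (C.P_one_subset hk.le hq) hpq

lemma mem_P_succ (hk : 1 ≤ k) {l l' : Ln} (hl : l ∈ C.L k) (hl' : l' ∈ C.L k) (hne : l ≠ l')
    {x : Pt} (hx : x ∈ l) (hx' : x ∈ l') : x ∈ C.P (k + 1) := by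
  rw [C.P_succ k hk]
  exact Or.inr ⟨l, hl, l', hl', hne, hx, hx'⟩

lemma P_succ_subset (hk : 1 ≤ k) : C.P (k + 1) ⊆ C.P k ∪ crossings (C.L k) := by
  rw [C.P_succ k hk]
  rintro x (hx | ⟨l, hl, l', hl', hne, hx, hx'⟩)
  · exact Or.inl hx
  · exact Or.inr (mem_biUnion (x := (l, l')) ⟨hl, hl', hne⟩ ⟨hx, hx'⟩)

lemma L_subset_image2 (hk : 1 ≤ k) : C.L k ⊆ image2 lineThrough (C.P k) (C.P k) := by
  intro l hl
  obtain ⟨a, ha, b, hb, -, rfl⟩ := C.exists_eq_lineThrough hk hl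
  exact mem_image2_of_mem ha hb

lemma P_finite (hk : 1 ≤ k) : (C.P k).Finite := by
  induction k, hk using Nat.le_induction with
  | base => exact finite_of_ncard_ne_zero (by rw [C.card_P1]; norm_num)
  | succ k hk ih =>
    have hL : (C.L k).Finite := (ih.image2 _ ih).subset (C.L_subset_image2 hk)
    exact (ih.union (crossings_finite hL fun _ => C.isLine_of_mem hk)).subset
      (C.P_succ_subset hk)

lemma L_finite (hk : 1 ≤ k) : (C.L k).Finite :=
  ((C.P_finite hk).image2 _ (C.P_finite hk)).subset (C.L_subset_image2 hk)

lemma nLns_le_sq (hk : 1 ≤ k) : nLns C k ≤ nPts C k ^ 2 := by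
  have hP := C.P_finite hk
  calc nLns C k ≤ (image2 lineThrough (C.P k) (C.P k)).ncard :=
        ncard_le_ncard (C.L_subset_image2 hk) (hP.image2 _ hP)
    _ ≤ (C.P k ×ˢ C.P k).ncard := by
        rw [← image_uncurry_prod]; exact ncard_image_le (hP.prod hP)
    _ = nPts C k ^ 2 := by rw [ncard_prod, sq, nPts]

lemma nPts_succ_le (hk : 1 ≤ k) : nPts C (k + 1) ≤ nPts C k + nLns C k ^ 2 := by
  have hL := C.L_finite hk
  have hlines : ∀ l ∈ C.L k, IsLine l := fun _ => C.isLine_of_mem hk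
  calc nPts C (k + 1) ≤ (C.P k ∪ crossings (C.L k)).ncard :=
        ncard_le_ncard (C.P_succ_subset hk) ((C.P_finite hk).union (crossings_finite hL hlines))
    _ ≤ nPts C k + (crossings (C.L k)).ncard := ncard_union_le _ _
    _ ≤ nPts C k + nLns C k ^ 2 := by grw [ncard_crossings_le hL hlines]; rfl

lemma four_le_nPts (hk : 1 ≤ k) : 4 ≤ nPts C k :=
  C.card_P1 ▸ ncard_le_ncard (C.P_one_subset hk) (C.P_finite hk)

lemma pencil_finite (hk : 1 ≤ k) (p : Pt) : {l | l ∈ C.L k ∧ p ∈ l}.Finite :=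
  (C.L_finite hk).subset fun _ hl => hl.1

lemma one_le_ptDeg (hk : 1 ≤ k) {p : Pt} (hp : p ∈ C.P k) : 1 ≤ ptDeg C k p := by
  obtain ⟨q, hq, hqp⟩ := exists_ne_of_one_lt_ncard (by rw [C.card_P1]; norm_num) p
  exact (ncard_pos (C.pencil_finite hk p)).mpr ⟨lineThrough p q,
    C.lineThrough_mem_of_mem_P_one hk hp hq hqp.symm, mem_lineThrough_left p q⟩

lemma exists_ptDeg_eq_minDeg (hk : 1 ≤ k) : ∃ p ∈ C.P k, ptDeg C k p = minDeg C k := by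
  have hP : (C.P k).Nonempty :=
    (nonempty_of_ncard_ne_zero (by rw [C.card_P1]; norm_num)).mono (C.P_one_subset hk)
  obtain ⟨p, hp⟩ := hP
  obtain ⟨q, hq, hmin⟩ := Nat.sInf_mem (s := {d | ∃ p ∈ C.P k, d = ptDeg C k p}) ⟨_, p, hp, rfl⟩
  exact ⟨q, hq, hmin.symm⟩

lemma exists_P_one_not_mem {l : Ln} (hl : IsLine l) :
    ∃ q ∈ C.P 1, ∃ q' ∈ C.P 1, q ≠ q' ∧ q ∉ l ∧ q' ∉ l := by
  have hfin : (C.P 1).Finite := C.P_finite le_rfl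
  have hon : (C.P 1 ∩ l).ncard ≤ 2 := by
    by_contra! h
    obtain ⟨a, b, c, ha, hb, hc, hab, hac, hbc⟩ := (two_lt_ncard_iff (hfin.inter_of_left _)).mp h
    refine C.genPos a ha.1 b hb.1 c hc.1 hab hac hbc (collinear_of_subset hl ?_)
    rintro x (rfl | rfl | rfl)
    exacts [ha.2, hb.2, hc.2]
  have hoff : 1 < (C.P 1 \ l).ncard := by
    have := ncard_inter_add_ncard_sdiff_eq_ncard (C.P 1) l hfin
    rw [C.card_P1] at this
    omega
  obtain ⟨q, hq, q', hq', hqq'⟩ := (one_lt_ncard hfin.sdiff).mp hoff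
  exact ⟨q, hq.1, q', hq'.1, hqq', hq.2, hq'.2⟩

lemma ncard_sdiff_singleton_le_ptDeg_mul (hk : 2 ≤ k) {p : Pt} (hp : p ∈ C.P k) {X : Set Pt}
    (hX : X ⊆ C.P k) {h : ℕ} (hline : ∀ l ∈ C.L k, p ∈ l → ((X \ {p}) ∩ l).ncard ≤ h) :
    (X \ {p}).ncard ≤ ptDeg C k p * h := by
  refine ncard_le_ncard_mul_of_subset_biUnion (C.pencil_finite (by omega) p) ?_
    fun l hl => hline l hl.1 hl.2
  rintro x ⟨hxX, hxp⟩
  have hpx : p ≠ x := fun h => hxp (h ▸ rfl)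
  exact mem_biUnion (x := lineThrough p x) ⟨C.lineThrough_mem hk hp (hX hxX) hpx,
    mem_lineThrough_left p x⟩ (mem_lineThrough_right p x)

lemma fan_subset_L (hk : 1 ≤ k) {q q' : Pt} (hq : q ∈ C.P 1) {S : Set Pt} (hS : S ⊆ C.P k)
    (hqS : q ∉ S) : fan q S q' ⊆ C.L k := by
  rintro _ ⟨⟨z, hz, rfl⟩, -⟩
  rw [lineThrough_comm]
  exact C.lineThrough_mem_of_mem_P_one hk (hS hz) hq fun h => hqS (h ▸ hz)

lemma ncard_mul_ncard_le_ptDeg_mul (hk : 1 ≤ k) {p : Pt} (hp : p ∈ C.P (k + 1)) {q q' : Pt}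
    {A B : Set Ln} (hA : ∀ a ∈ A, IsLine a ∧ q ∈ a ∧ q' ∉ a)
    (hB : ∀ b ∈ B, IsLine b ∧ q' ∈ b ∧ q ∉ b) (hAL : A ⊆ C.L k) (hBL : B ⊆ C.L k) {h : ℕ}
    (hAh : A.ncard ≤ h) (hBh : B.ncard ≤ h) :
    A.ncard * B.ncard ≤ ptDeg C (k + 1) p * h + 1 := by
  have hne : ∀ a ∈ A, ∀ b ∈ B, a ≠ b := fun a ha b hb hab => (hA a ha).2.2 (hab ▸ (hB b hb).2.1)
  have hmeet : ∀ a ∈ A, ∀ b ∈ B, ((a : Set Pt) ∩ b).Nonempty := fun a ha b hb =>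
    inter_nonempty_of_direction_ne (hA a ha).1 (hB b hb).1
      (C.noParallel k hk a (hAL ha) b (hBL hb) (hne a ha b hb))
  have hgrid : grid A B ⊆ C.P (k + 1) := by
    intro x hx
    obtain ⟨⟨a, ha, hxa⟩, b, hb, hxb⟩ := mem_grid.mp hx
    exact C.mem_P_succ hk (hAL ha) (hBL hb) (hne a ha b hb) hxa hxb
  have hfin : (grid A B).Finite := (C.P_finite (by omega)).subset hgrid
  have hline : ∀ l ∈ C.L (k + 1), p ∈ l → ((grid A B \ {p}) ∩ l).ncard ≤ h := by
    intro l hl _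
    calc ((grid A B \ {p}) ∩ l).ncard ≤ (grid A B ∩ l).ncard :=
          ncard_le_ncard (inter_subset_inter_left _ sdiff_subset) (hfin.inter_of_left _)
      _ ≤ max A.ncard B.ncard :=
          ncard_grid_inter_le hA hB ((C.L_finite hk).subset hAL) ((C.L_finite hk).subset hBL)
            (C.isLine_of_mem (by omega) hl)
      _ ≤ h := max_le hAh hBh
  calc A.ncard * B.ncard ≤ (grid A B).ncard := ncard_mul_ncard_le_ncard_grid hA hB hmeet hfin
    _ ≤ (grid A B \ {p}).ncard + 1 := by
        simpa using ncard_le_ncard_sdiff_add_ncard (grid A B) {p}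
    _ ≤ ptDeg C (k + 1) p * h + 1 := by
        grw [C.ncard_sdiff_singleton_le_ptDeg_mul (by omega) hp hgrid hline]

lemma sq_sub_one_le_ptDeg_mul (hk : 1 ≤ k) {p : Pt} (hp : p ∈ C.P (k + 1)) {l₀ : Ln}
    (hl₀ : IsLine l₀) {S : Set Pt} (hS : S ⊆ C.P k ∩ l₀) :
    (S.ncard - 1) ^ 2 ≤ ptDeg C (k + 1) p * S.ncard + 1 := by
  obtain ⟨q, hq, q', hq', hqq', hql₀, hq'l₀⟩ := C.exists_P_one_not_mem hl₀
  have hSP : S ⊆ C.P k := hS.trans inter_subset_left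
  have hSfin : S.Finite := (C.P_finite hk).subset hSP
  have hSl₀ : S ⊆ l₀ := hS.trans inter_subset_right
  calc (S.ncard - 1) ^ 2 ≤ (fan q S q').ncard * (fan q' S q).ncard := by
        rw [sq]
        exact Nat.mul_le_mul (Nat.sub_le_of_le_add (le_ncard_fan_add_one hSfin hl₀ hSl₀ hql₀))
          (Nat.sub_le_of_le_add (le_ncard_fan_add_one hSfin hl₀ hSl₀ hq'l₀))
    _ ≤ ptDeg C (k + 1) p * S.ncard + 1 :=
        C.ncard_mul_ncard_le_ptDeg_mul hk hp (isLine_and_mem_fan hSl₀ hql₀ hqq')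
          (isLine_and_mem_fan hSl₀ hq'l₀ hqq'.symm)
          (C.fan_subset_L hk hq hSP fun h => hql₀ (hSl₀ h))
          (C.fan_subset_L hk hq' hSP fun h => hq'l₀ (hSl₀ h))
          (ncard_fan_le hSfin) (ncard_fan_le hSfin)

lemma nPts_le_sq_ptDeg (hk : 1 ≤ k) {p : Pt} (hp : p ∈ C.P (k + 1)) :
    nPts C k ≤ (ptDeg C (k + 1) p + 1) ^ 2 := by
  set T := C.P k \ {p}
  have hpencil : {l | l ∈ C.L (k + 1) ∧ p ∈ l}.Nonempty :=
    nonempty_of_ncard_ne_zero (Nat.one_le_iff_ne_zero.mp (C.one_le_ptDeg (by omega) hp))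
  obtain ⟨l₀, hl₀, hmax⟩ :=
    exists_max_image _ (fun l : Ln => (T ∩ l).ncard) (C.pencil_finite (by omega) p) hpencil
  have hT : T.ncard ≤ ptDeg C (k + 1) p * (T ∩ l₀).ncard :=
    C.ncard_sdiff_singleton_le_ptDeg_mul (by omega) hp (C.P_subset_succ hk)
      fun l hl hpl => hmax l ⟨hl, hpl⟩
  have hgrid := C.sq_sub_one_le_ptDeg_mul hk hp (C.isLine_of_mem (by omega) hl₀.1)
    (S := T ∩ l₀) (inter_subset_inter_left _ sdiff_subset)
  calc nPts C k ≤ T.ncard + 1 := by simpa [T, nPts] using ncard_le_ncard_sdiff_add_ncard (C.P k) {p}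
    _ ≤ ptDeg C (k + 1) p * (T ∩ l₀).ncard + 1 := by omega
    _ ≤ (ptDeg C (k + 1) p + 1) ^ 2 := mul_add_one_le_sq_of_sub_one_sq_le hgrid

lemma nPts_le_pow_minDeg (hk : 1 ≤ k) : nPts C k ≤ (4 * minDeg C k) ^ 8 := by
  obtain ⟨p, hp, hpd⟩ := C.exists_ptDeg_eq_minDeg hk
  have hd : 1 ≤ minDeg C k := hpd ▸ C.one_le_ptDeg hk hp
  rcases hk.eq_or_lt with rfl | hk
  · calc nPts C 1 = 4 := C.card_P1
      _ ≤ 4 * minDeg C 1 := by omega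
      _ ≤ (4 * minDeg C 1) ^ 8 := Nat.le_self_pow (by norm_num) _
  obtain ⟨j, rfl⟩ : ∃ j, k = j + 1 := ⟨k - 1, by omega⟩
  have hj : 1 ≤ j := by omega
  have hn := C.nPts_le_sq_ptDeg hj hp
  rw [hpd] at hn
  calc nPts C (j + 1) ≤ nPts C j + (nPts C j ^ 2) ^ 2 := by
        grw [C.nPts_succ_le hj, C.nLns_le_sq hj]
    _ ≤ 2 * nPts C j ^ 4 := by
        have := Nat.le_self_pow (show 4 ≠ 0 by norm_num) (nPts C j); ring_nf; omega
    _ ≤ 2 * ((minDeg C (j + 1) + 1) ^ 2) ^ 4 := by gcongr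
    _ ≤ 2 * (2 * minDeg C (j + 1)) ^ 8 := by rw [← pow_mul]; gcongr; omega
    _ ≤ 2 ^ 8 * (2 * minDeg C (j + 1)) ^ 8 := by gcongr; norm_num
    _ = (4 * minDeg C (j + 1)) ^ 8 := by ring

end IterConfig

theorem stmt_12_general (C : IterConfig) (ε : ℝ) (hε1 : ε < 1 / 10) :
    ∃ c : ℝ, 0 < c ∧ ∀ k, 1 ≤ k →
      c * (nPts C k : ℝ) ^ ε ≤ (minDeg C k : ℝ) := by
  refine ⟨1 / 4, by norm_num, fun k hk => ?_⟩
  have hN : (1 : ℝ) ≤ nPts C k := by exact_mod_cast (by omega : 1 ≤ 4).trans (C.four_le_nPts hk)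
  have hbound : (nPts C k : ℝ) ^ ε ≤ 4 * minDeg C k :=
    rpow_le_of_le_pow (n := 8) (by norm_num) hN (by positivity)
      (by exact_mod_cast C.nPts_le_pow_minDeg hk) (by norm_num; linarith)
  linarith

/-- For every `0 ≤ ε < 1/10` there is a constant `c > 0` with `δ k ≥ c * (n k)^ε`. -/
theorem stmt_12 (C : IterConfig) (ε : ℝ) (hε0 : 0 ≤ ε) (hε1 : ε < 1 / 10) :
    ∃ c : ℝ, 0 < c ∧ ∀ k, 1 ≤ k →
      c * (nPts C k : ℝ) ^ ε ≤ (minDeg C k : ℝ) :=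
  stmt_12_general C ε hε1
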